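/- Consider a trajectory satisfying the D-GCBF condition h(x_{t+d}) ≥ (1-η)^d h(x_t) with η ∈ (0,1], together with the assumption that h(x_{t+j}) ≥ 0 for all j ∈ {1,…,d-1}. If h(x_t) ≥ 0, then h(x_{t+k}) ≥ 0 for all k ≥ 0; i.e., the state remains in the safe set at all future times. -/
import Mathlib


theorem stmt3 {n : ℕ} (h : (Fin n → ℝ) → ℝ) (x : ℕ → (Fin n → ℝ))
    (d : ℕ) (hd : 1 ≤ d) (η : ℝ) (hη0 : 0 < η) (hη1 : η ≤ 1)
    (hgcbf : ∀ t : ℕ, h (x (t + d)) ≥ (1 - η) ^ d * h (x t))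
    (hint : ∀ t : ℕ, ∀ j : ℕ, 1 ≤ j → j ≤ d - 1 → h (x (t + j)) ≥ 0)
    (h0 : h (x 0) ≥ 0) :
    ∀ k : ℕ, h (x k) ≥ 0 := by
  intro k
  induction k using Nat.strong_induction_on with
  | _ k ih =>
    rcases lt_or_ge k d with hk | hk
    · rcases Nat.eq_zero_or_pos k with rfl | hk0
      · exact h0
      · have := hint 0 k hk0 (by omega)
        simpa using this
    · have hkd : k - d + d = k := Nat.sub_add_cancel hk
      have hle := hgcbf (k - d)
      rw [hkd] at hle
      have hih := ih (k - d) (by omega)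
      have hpow : (0:ℝ) ≤ (1 - η) ^ d := pow_nonneg (by linarith) d
      calc (0:ℝ) ≤ (1 - η) ^ d * h (x (k - d)) := mul_nonneg hpow hih
        _ ≤ h (x k) := hle
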